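/- Let A and B be Banach algebras, let T : A → B be a bounded linear surjective map, and define the bounded bilinear map m : A × B → B by m(a,b) = T(a)b (product taken in B). If m is left strongly Arens irregular, then B is left strongly Arens irregular. -/

import Mathlib

open Filter Topology ContinuousLinearMap NormedSpace

noncomputable section

variable {X Y Z W E F : Type*}
  [NormedAddCommGroup X] [NormedSpace ℂ X]
  [NormedAddCommGroup Y] [NormedSpace ℂ Y]
  [NormedAddCommGroup Z] [NormedSpace ℂ Z]
  [NormedAddCommGroup E] [NormedSpace ℂ E]
  [NormedAddCommGroup F] [NormedSpace ℂ F]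

/-- Port helper: `NormedSpace.Dual` as in the older Mathlib (since replaced by `StrongDual`). -/
abbrev NormedSpace.Dual (𝕜 : Type*) (E : Type*) [NontriviallyNormedField 𝕜]
    [SeminormedAddCommGroup E] [NormedSpace 𝕜 E] : Type _ :=
  E →L[𝕜] 𝕜

/-- The (first) Arens adjoint `m* : Z* × X → Y*` of a bounded bilinear map
`m : X × Y → Z`, characterized by `⟨m*(z',x), y⟩ = ⟨z', m(x,y)⟩`. -/
noncomputable def arensAdj (m : X →L[ℂ] Y →L[ℂ] Z) :
    Dual ℂ Z →L[ℂ] X →L[ℂ] Dual ℂ Y :=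
  ((ContinuousLinearMap.compL ℂ Y Z ℂ).flip.comp m).flip

/-- The Arens triple adjoint `m*** : X** × Y** → Z**`. -/
noncomputable def arensExt (m : X →L[ℂ] Y →L[ℂ] Z) :
    Dual ℂ (Dual ℂ X) →L[ℂ] Dual ℂ (Dual ℂ Y) →L[ℂ] Dual ℂ (Dual ℂ Z) :=
  arensAdj (arensAdj (arensAdj m))

/-- A map between dual spaces is weak*-weak* continuous. -/
def IsWeakStarCont (f : Dual ℂ E → Dual ℂ F) : Prop :=
  Continuous fun x : WeakDual ℂ E =>
    StrongDual.toWeakDual (f (WeakDual.toStrongDual x))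

/-- First topological center of a bounded bilinear map. -/
def arensZ1 (m : X →L[ℂ] Y →L[ℂ] Z) : Set (Dual ℂ (Dual ℂ X)) :=
  {x'' | IsWeakStarCont fun y'' => arensExt m x'' y''}

/-- Second topological center of a bounded bilinear map. -/
def arensZ2 (m : X →L[ℂ] Y →L[ℂ] Z) : Set (Dual ℂ (Dual ℂ Y)) :=
  {y'' | IsWeakStarCont fun x'' => arensExt m.flip y'' x''}

/-- `m` is Arens regular when `m*** = m^{t***t}`. -/
def ArensRegular (m : X →L[ℂ] Y →L[ℂ] Z) : Prop :=
  arensExt m = (arensExt m.flip).flip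

/-- `m` is left strongly Arens irregular when `Z₁(m)` is the canonical image of `X`. -/
def LeftStronglyArensIrregular (m : X →L[ℂ] Y →L[ℂ] Z) : Prop :=
  arensZ1 m = Set.range (NormedSpace.inclusionInDoubleDual ℂ X)

/-- `m` is right strongly Arens irregular when `Z₂(m)` is the canonical image of `Y`. -/
def RightStronglyArensIrregular (m : X →L[ℂ] Y →L[ℂ] Z) : Prop :=
  arensZ2 m = Set.range (NormedSpace.inclusionInDoubleDual ℂ Y)

/-- The adjoint `T* : F* → E*` of a bounded linear map. -/
noncomputable def dualMap' (T : E →L[ℂ] F) : Dual ℂ F →L[ℂ] Dual ℂ E :=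
  (ContinuousLinearMap.compL ℂ E F ℂ).flip T

/-- The second adjoint `T** : E** → F**` of a bounded linear map. -/
noncomputable def bidualMap (T : E →L[ℂ] F) :
    Dual ℂ (Dual ℂ E) →L[ℂ] Dual ℂ (Dual ℂ F) :=
  dualMap' (dualMap' T)

/-- A net in `A`: a function from a nonempty directed preorder to `A`. -/
structure Net (A : Type*) where
  ι : Type
  [pre : Preorder ι]
  [dir : IsDirected ι (· ≤ ·)]
  [ne : Nonempty ι]
  e : ι → A

attribute [instance] Net.pre Net.dir Net.ne

/-- A bounded approximate identity for a (non-unital) Banach algebra. -/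
def IsBAI {A : Type*} [NonUnitalNormedRing A] (N : Net A) : Prop :=
  (∃ C : ℝ, ∀ i, ‖N.e i‖ ≤ C) ∧
  (∀ a : A, Tendsto (fun i => N.e i * a) atTop (𝓝 a)) ∧
  (∀ a : A, Tendsto (fun i => a * N.e i) atTop (𝓝 a))

end

/-! A surjection `T` between Banach spaces has a bounded-below adjoint `T*` (open mapping theorem),
so by Hahn–Banach every functional on `F*` factors through `T*`; that is, `T**` is surjective.
Since `(m ∘ T)*** (a'', ·) = m*** (T** a'', ·)`, the first topological centre of `m ∘ T` is the
preimage of that of `m` under `T**`, and pushing `Z₁(m ∘ T) = A` forward along the surjection `T**`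
gives `Z₁(m) = T(A) = B`. -/

section Bidual

variable {E F : Type*} [NormedAddCommGroup E] [NormedSpace ℂ E]
  [NormedAddCommGroup F] [NormedSpace ℂ F]

theorem exists_norm_le_mul_norm_dualMap' [CompleteSpace E] [CompleteSpace F] (T : E →L[ℂ] F)
    (hT : Function.Surjective T) : ∃ C, ∀ g : Dual ℂ F, ‖g‖ ≤ C * ‖dualMap' T g‖ := by
  obtain ⟨C, hC, hpre⟩ := T.exists_preimage_norm_le hT
  refine ⟨C, fun g => g.opNorm_le_bound (by positivity) fun b => ?_⟩
  obtain ⟨a, rfl, ha⟩ := hpre b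
  calc ‖g (T a)‖ = ‖dualMap' T g a‖ := rfl
    _ ≤ ‖dualMap' T g‖ * (C * ‖T a‖) := ((dualMap' T g).le_opNorm a).trans (by gcongr)
    _ = C * ‖dualMap' T g‖ * ‖T a‖ := by ring

theorem exists_comp_eq_of_norm_le_mul_norm (S : E →L[ℂ] F) {C : ℝ}
    (hS : ∀ x, ‖x‖ ≤ C * ‖S x‖) (φ : Dual ℂ E) : ∃ ψ : Dual ℂ F, ψ.comp S = φ := by
  have hinj : Function.Injective S := fun x y hxy => by
    simpa [sub_eq_zero, hxy] using hS (x - y)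
  let e := LinearEquiv.ofInjective (S : E →ₗ[ℂ] F) hinj
  have hbound : ∀ y, ‖φ (e.symm y)‖ ≤ ‖φ‖ * C * ‖y‖ := fun y => by
    have hy : S (e.symm y) = y := congrArg Subtype.val (e.apply_symm_apply y)
    calc ‖φ (e.symm y)‖ ≤ ‖φ‖ * ‖e.symm y‖ := φ.le_opNorm _
      _ ≤ ‖φ‖ * (C * ‖S (e.symm y)‖) := by gcongr; exact hS _
      _ = ‖φ‖ * C * ‖y‖ := by rw [hy, Submodule.coe_norm, mul_assoc]
  obtain ⟨ψ, hψ, -⟩ :=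
    exists_extension_norm_eq _ (((φ : E →ₗ[ℂ] ℂ) ∘ₗ e.symm.toLinearMap).mkContinuous _ hbound)
  exact ⟨ψ, ContinuousLinearMap.ext fun x => (hψ (e x)).trans (congrArg φ (e.symm_apply_apply x))⟩

theorem bidualMap_surjective [CompleteSpace E] [CompleteSpace F] (T : E →L[ℂ] F)
    (hT : Function.Surjective T) : Function.Surjective (bidualMap T) := fun b'' => by
  obtain ⟨C, hC⟩ := exists_norm_le_mul_norm_dualMap' T hT
  exact exists_comp_eq_of_norm_le_mul_norm (dualMap' T) hC b''

theorem bidualMap_inclusionInDoubleDual (T : E →L[ℂ] F) (x : E) :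
    bidualMap T (inclusionInDoubleDual ℂ E x) = inclusionInDoubleDual ℂ F (T x) :=
  rfl

end Bidual

section Comp

variable {X Y Z W : Type*} [NormedAddCommGroup X] [NormedSpace ℂ X]
  [NormedAddCommGroup Y] [NormedSpace ℂ Y] [NormedAddCommGroup Z] [NormedSpace ℂ Z]
  [NormedAddCommGroup W] [NormedSpace ℂ W]

theorem arensZ1_comp (m : Y →L[ℂ] Z →L[ℂ] W) (T : X →L[ℂ] Y) :
    arensZ1 (m.comp T) = bidualMap T ⁻¹' arensZ1 m :=
  rfl

theorem LeftStronglyArensIrregular.of_comp [CompleteSpace X] [CompleteSpace Y]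
    {m : Y →L[ℂ] Z →L[ℂ] W} {T : X →L[ℂ] Y} (hT : Function.Surjective T)
    (h : LeftStronglyArensIrregular (m.comp T)) : LeftStronglyArensIrregular m := by
  unfold LeftStronglyArensIrregular at h ⊢
  calc arensZ1 m = bidualMap T '' (bidualMap T ⁻¹' arensZ1 m) :=
        (Set.image_preimage_eq _ (bidualMap_surjective T hT)).symm
    _ = bidualMap T '' Set.range (inclusionInDoubleDual ℂ X) := by rw [← arensZ1_comp, h]
    _ = Set.range (inclusionInDoubleDual ℂ Y) := by
        rw [← Set.range_comp, ← hT.range_comp]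
        exact congrArg Set.range (funext (bidualMap_inclusionInDoubleDual T))

end Comp

theorem stmt_2_general {A B : Type*} [NonUnitalNormedRing A] [NormedSpace ℂ A] [CompleteSpace A] [NonUnitalNormedRing B] [NormedSpace ℂ B] [IsScalarTower ℂ B B] [SMulCommClass ℂ B B] [CompleteSpace B]
    (T : A →L[ℂ] B) (hT : Function.Surjective T)
    (hm : LeftStronglyArensIrregular ((ContinuousLinearMap.mul ℂ B).comp T)) :
    LeftStronglyArensIrregular (ContinuousLinearMap.mul ℂ B) :=
  hm.of_comp hT

/-- For surjective `T`, if `m(a,b) = T(a)b` is left strongly Arens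
irregular then so is `B`. -/
theorem stmt_2 {A B : Type*} [NonUnitalNormedRing A] [NormedSpace ℂ A] [IsScalarTower ℂ A A] [SMulCommClass ℂ A A] [CompleteSpace A] [NonUnitalNormedRing B] [NormedSpace ℂ B] [IsScalarTower ℂ B B] [SMulCommClass ℂ B B] [CompleteSpace B]
    (T : A →L[ℂ] B) (hT : Function.Surjective T)
    (hm : LeftStronglyArensIrregular ((ContinuousLinearMap.mul ℂ B).comp T)) :
    LeftStronglyArensIrregular (ContinuousLinearMap.mul ℂ B) :=
  stmt_2_general T hT hm
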